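/- Let H be a real Hilbert space, B a Fredholm symmetric bilinear form on H, and X ⊆ H a closed subspace with X ∩ Ker(B) = {0}. Then n₋(B) ≥ n₋(B|_{X×X}) + dim Ker(B|_{X×X}), where n₋ denotes the Morse index and Ker(B|_{X×X}) = {x ∈ X : B(x,y) = 0 for all y ∈ X}. -/

import Mathlib

open scoped RealInnerProductSpace

/-- Morse index of the restriction of `B` to a subspace `X`. -/
noncomputable def morseIndexOn {H : Type*} [NormedAddCommGroup H] [InnerProductSpace ℝ H]
    (B : H →L[ℝ] H →L[ℝ] ℝ) (X : Submodule ℝ H) : Cardinal :=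
  ⨆ W : {W : Submodule ℝ H // W ≤ X ∧ ∀ x ∈ W, x ≠ 0 → B x x < 0}, Module.rank ℝ W.1

/-- The kernel of the restriction of `B` to `X`: `{x ∈ X : B(x,y) = 0 for all y ∈ X}`. -/
def kerOn {H : Type*} [NormedAddCommGroup H] [InnerProductSpace ℝ H]
    (B : H →L[ℝ] H →L[ℝ] ℝ) (X : Submodule ℝ H) : Submodule ℝ H where
  carrier := {x | x ∈ X ∧ ∀ y ∈ X, B x y = 0}
  zero_mem' := ⟨X.zero_mem, fun y _ => by simp⟩
  add_mem' := fun {x z} hx hz => ⟨X.add_mem hx.1 hz.1, fun y hy => by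
    simp [map_add, hx.2 y hy, hz.2 y hy]⟩
  smul_mem' := fun c {x} hx => ⟨X.smul_mem c hx.1, fun y hy => by
    simp [map_smul, hx.2 y hy]⟩

/-- Morse index of `B` on the whole space. -/
noncomputable def morseIndex {H : Type*} [NormedAddCommGroup H] [InnerProductSpace ℝ H]
    (B : H →L[ℝ] H →L[ℝ] ℝ) : Cardinal :=
  ⨆ W : {W : Submodule ℝ H // ∀ x ∈ W, x ≠ 0 → B x x < 0}, Module.rank ℝ W.1

/- Let `W ⊆ X` be negative definite and `N = Ker(B|_{X×X})`. Then `W ∩ N = 0`, `B` is negative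
semidefinite on `W + N`, and, as `X ∩ Ker B = 0`, `W + N` meets `Ker B = Ker T` trivially.
Such a subspace `V` is mapped by `v ↦ v - ε T v` injectively onto a negative definite one, since
`B(v - εTv, v - εTv) ≤ B(v, v) - 2ε‖Tv‖² + ε²‖T‖‖Tv‖² < 0` once `ε‖T‖ < 1` and `Tv ≠ 0`.
Hence `dim W + dim N = dim (W + N) ≤ n₋(B)`. -/

section MorseIndex

variable {H : Type*} [NormedAddCommGroup H] [InnerProductSpace ℝ H]

theorem rank_le_morseIndex (B : H →L[ℝ] H →L[ℝ] ℝ) {W : Submodule ℝ H}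
    (hW : ∀ x ∈ W, x ≠ 0 → B x x < 0) : Module.rank ℝ W ≤ morseIndex B :=
  le_ciSup Cardinal.bddAbove_of_small
    (⟨W, hW⟩ : {W : Submodule ℝ H // ∀ x ∈ W, x ≠ 0 → B x x < 0})

theorem real_inner_apply_sub_smul_apply_neg (T : H →L[ℝ] H)
    (hsa : ∀ x y, ⟪T x, y⟫ = ⟪x, T y⟫) {ε : ℝ} (hε : 0 < ε) (hεT : ε * ‖T‖ < 1) {v : H}
    (hv : ⟪T v, v⟫ ≤ 0) (hTv : T v ≠ 0) :
    ⟪T (v - ε • T v), v - ε • T v⟫ < 0 := by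
  have hexpand : ⟪T (v - ε • T v), v - ε • T v⟫
      = ⟪T v, v⟫ - 2 * ε * ‖T v‖ ^ 2 + ε ^ 2 * ⟪T (T v), T v⟫ := by
    have hcross : ⟪T (T v), v⟫ = ‖T v‖ ^ 2 := by
      rw [hsa, real_inner_comm, real_inner_self_eq_norm_sq]
    rw [map_sub, map_smul, inner_sub_left, inner_sub_right, inner_sub_right,
      real_inner_smul_left, real_inner_smul_left, real_inner_smul_right,
      real_inner_smul_right, hcross, real_inner_self_eq_norm_sq]
    ring
  have hbound : ⟪T (T v), T v⟫ ≤ ‖T‖ * ‖T v‖ ^ 2 :=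
    calc ⟪T (T v), T v⟫ ≤ ‖T (T v)‖ * ‖T v‖ := real_inner_le_norm _ _
      _ ≤ ‖T‖ * ‖T v‖ * ‖T v‖ := by gcongr; exact T.le_opNorm _
      _ = ‖T‖ * ‖T v‖ ^ 2 := by ring
  have hpos : 0 < ε * ‖T v‖ ^ 2 := by positivity
  rw [hexpand]
  nlinarith [mul_le_mul_of_nonneg_left hbound (sq_nonneg ε)]

theorem rank_le_morseIndex_of_nonpos (B : H →L[ℝ] H →L[ℝ] ℝ) (T : H →L[ℝ] H)
    (hrep : ∀ x y, B x y = ⟪T x, y⟫) (hsa : ∀ x y, ⟪T x, y⟫ = ⟪x, T y⟫)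
    {V : Submodule ℝ H} (hV : ∀ v ∈ V, B v v ≤ 0)
    (hVrad : ∀ v ∈ V, (∀ y, B v y = 0) → v = 0) :
    Module.rank ℝ V ≤ morseIndex B := by
  set ε : ℝ := (‖T‖ + 1)⁻¹
  have hε : 0 < ε := by positivity
  have hεT : ε * ‖T‖ < 1 := by
    rw [inv_mul_lt_iff₀ (by positivity)]
    linarith
  set φ : V →ₗ[ℝ] H := (LinearMap.id - ε • T.toLinearMap).domRestrict V
  have hφneg : ∀ v : V, v ≠ 0 → B (φ v) (φ v) < 0 := by
    intro v hv
    have hTv : T v ≠ 0 := fun h =>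
      hv (Subtype.ext (hVrad v v.2 fun y => by rw [hrep, h, inner_zero_left]))
    rw [hrep]
    exact real_inner_apply_sub_smul_apply_neg T hsa hε hεT (hrep v v ▸ hV v v.2) hTv
  have hφinj : Function.Injective φ := by
    rw [← LinearMap.ker_eq_bot, LinearMap.ker_eq_bot']
    intro v hv
    by_contra hv0
    simpa [hv] using hφneg v hv0
  rw [← rank_range_of_injective φ hφinj]
  apply rank_le_morseIndex
  rintro _ ⟨v, rfl⟩ hx
  exact hφneg v (by rintro rfl; exact hx (map_zero φ))

end MorseIndex

section KerOn

variable {H : Type*} [NormedAddCommGroup H] [InnerProductSpace ℝ H]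
  {B : H →L[ℝ] H →L[ℝ] ℝ} {X W : Submodule ℝ H}

theorem inf_kerOn_eq_bot (hW : ∀ x ∈ W, x ≠ 0 → B x x < 0) : W ⊓ kerOn B X = ⊥ := by
  rw [eq_bot_iff]
  rintro x ⟨hxW, hxX, hxB⟩
  by_contra hx
  exact (hW x hxW hx).ne (hxB x hxX)

theorem apply_self_nonpos_of_mem_sup_kerOn (hB : ∀ x y, B x y = B y x) (hWX : W ≤ X)
    (hW : ∀ x ∈ W, x ≠ 0 → B x x < 0) {v : H} (hv : v ∈ W ⊔ kerOn B X) : B v v ≤ 0 := by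
  obtain ⟨w, hw, n, ⟨hnX, hnB⟩, rfl⟩ := Submodule.mem_sup.mp hv
  have hww : B w w ≤ 0 := by
    rcases eq_or_ne w 0 with rfl | hw0
    · simp
    · exact (hW w hw hw0).le
  simp only [map_add, add_apply, hnB _ hnX, hnB _ (hWX hw), hB w n]
  linarith

theorem eq_zero_of_mem_sup_kerOn (hWX : W ≤ X) (hW : ∀ x ∈ W, x ≠ 0 → B x x < 0)
    (hXrad : ∀ x ∈ X, (∀ y, B x y = 0) → x = 0) {v : H} (hv : v ∈ W ⊔ kerOn B X)
    (hvrad : ∀ y, B v y = 0) : v = 0 := by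
  obtain ⟨w, hw, n, ⟨hnX, hnB⟩, rfl⟩ := Submodule.mem_sup.mp hv
  obtain rfl : w = 0 := by
    by_contra hw0
    have hvw := hvrad w
    rw [map_add, add_apply, hnB w (hWX hw)] at hvw
    exact (hW w hw hw0).ne (by simpa using hvw)
  rw [zero_add] at hvrad ⊢
  exact hXrad n hnX hvrad

end KerOn

theorem stmt1_general {H : Type*} [NormedAddCommGroup H] [InnerProductSpace ℝ H]
    (B : H →L[ℝ] H →L[ℝ] ℝ) (T : H →L[ℝ] H)
    (hrep : ∀ x y, B x y = ⟪T x, y⟫)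
    (hsa : ∀ x y, ⟪T x, y⟫ = ⟪x, T y⟫)
    (X : Submodule ℝ H)
    (hXker : ∀ x ∈ X, (∀ y, B x y = 0) → x = 0) :
    morseIndexOn B X + Module.rank ℝ (kerOn B X) ≤ morseIndex B := by
  have hB : ∀ x y, B x y = B y x := fun x y => by rw [hrep, hrep, hsa, real_inner_comm]
  have : Nonempty {W : Submodule ℝ H // W ≤ X ∧ ∀ x ∈ W, x ≠ 0 → B x x < 0} :=
    ⟨⟨⊥, bot_le, fun x hx hx0 => absurd ((Submodule.mem_bot ℝ).mp hx) hx0⟩⟩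
  rw [morseIndexOn, Cardinal.ciSup_add _ Cardinal.bddAbove_of_small]
  refine ciSup_le' fun ⟨W, hWX, hW⟩ => ?_
  rw [← Submodule.rank_sup_add_rank_inf_eq, inf_kerOn_eq_bot hW, rank_bot, add_zero]
  exact rank_le_morseIndex_of_nonpos B T hrep hsa
    (fun v hv => apply_self_nonpos_of_mem_sup_kerOn hB hWX hW hv)
    (fun v hv => eq_zero_of_mem_sup_kerOn hWX hW hXker hv)

/-- for a Fredholm symmetric bilinear form `B` and a closed subspace `X`
with `X ∩ Ker B = {0}`, one has `n₋(B) ≥ n₋(B|X) + dim Ker(B|X)`. -/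
theorem stmt1 {H : Type*} [NormedAddCommGroup H] [InnerProductSpace ℝ H] [CompleteSpace H]
    (B : H →L[ℝ] H →L[ℝ] ℝ) (T : H →L[ℝ] H)
    (hrep : ∀ x y, B x y = ⟪T x, y⟫)
    (hsa : ∀ x y, ⟪T x, y⟫ = ⟪x, T y⟫)
    (hker : FiniteDimensional ℝ (LinearMap.ker (T : H →ₗ[ℝ] H)))
    (hclosed : IsClosed (LinearMap.range (T : H →ₗ[ℝ] H) : Set H))
    (hcoker : FiniteDimensional ℝ (H ⧸ LinearMap.range (T : H →ₗ[ℝ] H)))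
    (X : Submodule ℝ H) (hX : IsClosed (X : Set H))
    (hXker : ∀ x ∈ X, (∀ y, B x y = 0) → x = 0) :
    morseIndexOn B X + Module.rank ℝ (kerOn B X) ≤ morseIndex B :=
  stmt1_general B T hrep hsa X hXker
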